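/- Suppose d' = 2d and (α,β) ∈ F_{p^m} × F_q with (α,β) ≠ (0,0). Then there exists an integer z such that, as complex numbers, T(α,β) = 1 + (p^d + 1)·z; that is, T(α,β) is a rational integer congruent to 1 modulo p^d + 1. -/

import Mathlib

open scoped BigOperators Classical

noncomputable section

/-- The map `φ_{α,β}(x) = α x^{p^m} + β x^{p^k} + β^{p^{n-k}} x^{p^{n-k}}`. -/
def phiMap (p m n k : ℕ) {F : Type} [Field F] (α β x : F) : F :=
  α * x ^ p ^ m + β * x ^ p ^ k + β ^ p ^ (n - k) * x ^ p ^ (n - k)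

/-- The trace-type sum `x ↦ ∑_{i<r} x^{p^{t i}}`; for `x` in the subfield of size
`p^{t·r}` this is the relative trace down to the subfield of size `p^t`. -/
def trSum (p t r : ℕ) {F : Type} [Field F] (x : F) : F :=
  ∑ i ∈ Finset.range r, x ^ p ^ (t * i)

/-- `ζ_p^c = exp(2πi·c̃/p)` for a lift `c̃` of `c : F_p`. -/
noncomputable def expChar (p : ℕ) (c : ZMod p) : ℂ :=
  Complex.exp (2 * Real.pi * Complex.I * (c.val : ℂ) / (p : ℂ))

/-- Identify an element of the prime field of `F` with an element of `ZMod p`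
(the partial inverse of the algebra map). -/
noncomputable def fToZMod (p : ℕ) {F : Type} [Field F] [Algebra (ZMod p) F] (x : F) : ZMod p :=
  letI : Nonempty (ZMod p) := ⟨0⟩
  Function.invFun (algebraMap (ZMod p) F) x

/-- `T(α,β) = ∑_{x ∈ F_q} ζ_p^{Tr^m_1(α x^{p^m+1}) + Tr^n_1(β x^{p^k+1})}`. -/
noncomputable def Tsum (p m n k : ℕ) (F : Type) [Field F] [Fintype F] [Algebra (ZMod p) F]
    (α β : F) : ℂ :=
  ∑ x : F, expChar p (fToZMod p (trSum p 1 m (α * x ^ (p ^ m + 1))) +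
      fToZMod p (trSum p 1 n (β * x ^ (p ^ k + 1))))

/-- `S(α,β,γ) = ∑_{x ∈ F_q} ζ_p^{Tr^m_1(α x^{p^m+1}) + Tr^n_1(β x^{p^k+1} + γ x)}`. -/
noncomputable def Ssum (p m n k : ℕ) (F : Type) [Field F] [Fintype F] [Algebra (ZMod p) F]
    (α β γ : F) : ℂ :=
  ∑ x : F, expChar p (fToZMod p (trSum p 1 m (α * x ^ (p ^ m + 1))) +
      fToZMod p (trSum p 1 n (β * x ^ (p ^ k + 1) + γ * x)))

/-- `√(q₀*)` where `q₀* = (−1)^{(q₀−1)/2} q₀`. -/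
noncomputable def sqrtStar (q0 : ℕ) : ℂ :=
  if q0 % 4 = 1 then (Real.sqrt q0 : ℂ) else Complex.I * (Real.sqrt q0 : ℂ)

/-- `ζ_p = exp(2πi/p)`. -/
noncomputable def zetaC (p : ℕ) : ℂ := Complex.exp (2 * Real.pi * Complex.I / (p : ℂ))

/-- Number of pairs `(α,β) ∈ F_{p^m} × F_q` with `T(α,β) = v`. -/
noncomputable def Tcount (p m n k : ℕ) (F : Type) [Field F] [Fintype F] [Algebra (ZMod p) F]
    (v : ℂ) : ℕ :=
  Nat.card {ab : F × F // ab.1 ^ p ^ m = ab.1 ∧ Tsum p m n k F ab.1 ab.2 = v}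

/-- Number of triples `(α,β,γ) ∈ F_{p^m} × F_q × F_q` with `S(α,β,γ) = v`. -/
noncomputable def Scount (p m n k : ℕ) (F : Type) [Field F] [Fintype F] [Algebra (ZMod p) F]
    (v : ℂ) : ℕ :=
  Nat.card {abc : F × F × F // abc.1 ^ p ^ m = abc.1 ∧ Ssum p m n k F abc.1 abc.2.1 abc.2.2 = v}

/-- Hamming weight of the codeword of `C₁` attached to `(α,β)`:
the number of `0 ≤ i ≤ q-2` with `Tr^m_t(α π^{i(p^m+1)}) + Tr^n_t(β π^{i(p^k+1)}) ≠ 0`. -/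
noncomputable def wt1 (p m n k t : ℕ) {F : Type} [Field F] (π α β : F) : ℕ :=
  Nat.card {i : ℕ // i ≤ p ^ n - 2 ∧
    trSum p t (m / t) (α * π ^ (i * (p ^ m + 1))) +
    trSum p t (n / t) (β * π ^ (i * (p ^ k + 1))) ≠ 0}

/-- Number of pairs `(α,β) ∈ F_{p^m} × F_q` whose `C₁`-codeword has weight `v`. -/
noncomputable def wt1count (p m n k t : ℕ) (F : Type) [Field F] [Fintype F] (π : F) (v : ℕ) : ℕ :=
  Nat.card {ab : F × F // ab.1 ^ p ^ m = ab.1 ∧ wt1 p m n k t π ab.1 ab.2 = v}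

/-- Hamming weight of the codeword of `C₂` attached to `(α,β,γ)`. -/
noncomputable def wt2 (p m n k t : ℕ) {F : Type} [Field F] (π α β γ : F) : ℕ :=
  Nat.card {i : ℕ // i ≤ p ^ n - 2 ∧
    trSum p t (m / t) (α * π ^ (i * (p ^ m + 1))) +
    trSum p t (n / t) (β * π ^ (i * (p ^ k + 1)) + γ * π ^ i) ≠ 0}

/-- Number of triples `(α,β,γ)` whose `C₂`-codeword has weight `v`. -/
noncomputable def wt2count (p m n k t : ℕ) (F : Type) [Field F] [Fintype F] (π : F) (v : ℕ) : ℕ :=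
  Nat.card {abc : F × F × F // abc.1 ^ p ^ m = abc.1 ∧ wt2 p m n k t π abc.1 abc.2.1 abc.2.2 = v}

/-!
Write `f(x)` for the exponent of `ζ_p` in the summand of `T(α,β)`, so that
`T(α,β) = 1 + ∑_{x ≠ 0} ζ_p^{f(x)}`. Since `m/d` and `k/d` are odd, `p^m + 1` and `p^k + 1` are
both congruent to `p^d + 1` modulo `p^{2d} - 1`, so for `c ∈ F_{p^{2d}}^*` with
`c^{p^d+1} = t ∈ F_p^*` one gets `f(cx) = t f(x)`. For `t = 1` this says that the `(p^d+1)`-th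
roots of unity act freely on `F_q^*` preserving `f`, so every fibre of `f` on `F_q^*` has size
divisible by `p^d + 1`. Since every `t ∈ F_p^*` is a `(p^d+1)`-th power in `F_{p^{2d}}`, the fibres
over nonzero values all have the same size, and `∑_{x ≠ 0} ζ_p^{f(x)} = #f⁻¹(0) - #f⁻¹(1)` is
divisible by `p^d + 1`.
-/

open Finset

lemma Subgroup.card_dvd_card_of_mul_mem {G : Type*} [Group G] [Fintype G] (H : Subgroup G)
    (s : Finset G) (hs : ∀ x ∈ s, ∀ h ∈ H, x * h ∈ s) : Nat.card H ∣ #s := by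
  have hpre : QuotientGroup.mk ⁻¹' (QuotientGroup.mk '' (s : Set G) : Set (G ⧸ H)) = s := by
    refine subset_antisymm ?_ (Set.subset_preimage_image _ _)
    rintro y ⟨x, hx, hxy⟩
    rw [← mul_inv_cancel_left x y]
    exact hs x hx _ (QuotientGroup.eq.mp hxy)
  have := QuotientGroup.card_preimage_mk H (QuotientGroup.mk '' (s : Set G))
  rw [hpre, Nat.card_coe_set_eq, Set.ncard_coe_finset] at this
  exact this ▸ dvd_mul_right _ _

lemma Fintype.sum_eq_add_sum_units {G₀ M : Type*} [GroupWithZero G₀] [Fintype G₀]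
    [AddCommMonoid M] (g : G₀ → M) : ∑ x, g x = g 0 + ∑ u : G₀ˣ, g u := by
  rw [← Finset.add_sum_erase _ _ (mem_univ 0)]
  congr 1
  rw [Finset.sum_subtype (univ.erase 0) (p := (· ≠ 0)) (by simp)]
  exact (Fintype.sum_equiv unitsEquivNeZero _ _ fun _ => rfl).symm

section CharacterSums

variable {p : ℕ} [Fact p.Prime]

lemma expChar_eq_stdAddChar (c : ZMod p) : expChar p c = ZMod.stdAddChar c := by
  rw [ZMod.stdAddChar_apply, ZMod.toCircle_apply, expChar]

lemma sum_expChar : ∑ c : ZMod p, expChar p c = 0 := by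
  simp only [expChar_eq_stdAddChar]
  exact AddChar.sum_eq_zero_of_ne_one (by simpa using ZMod.isPrimitive_stdAddChar p one_ne_zero)

lemma sum_expChar_comp_of_scaling {G : Type*} [Group G] [Fintype G] (f : G → ZMod p)
    (hf : ∀ t ≠ 0, ∃ c : G, ∀ x, f (c * x) = t * f x) :
    ∑ x, expChar p (f x) = #{x | f x = 0} - #{x | f x = 1} := by
  have hfiber : ∀ t ≠ 0, #{x | f x = t} = #{x | f x = 1} := by
    intro t ht
    obtain ⟨c, hc⟩ := hf t ht
    refine Finset.card_nbij' (c⁻¹ * ·) (c * ·) ?_ ?_ ?_ ?_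
    · intro x hx
      simp only [coe_filter, mem_univ, true_and, Set.mem_ofPred_eq] at hx ⊢
      have := hc (c⁻¹ * x)
      rw [mul_inv_cancel_left, hx] at this
      exact (mul_eq_left₀ ht).mp this.symm
    · intro x hx
      simp only [coe_filter, mem_univ, true_and, Set.mem_ofPred_eq] at hx ⊢
      rw [hc, hx, mul_one]
    · intro x _; simp
    · intro x _; simp
  calc ∑ x, expChar p (f x)
      = ∑ t : ZMod p, (#{x | f x = t} : ℂ) * expChar p t := by
        rw [← Finset.sum_fiberwise univ f]
        refine Finset.sum_congr rfl fun t _ => ?_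
        rw [Finset.sum_congr rfl fun x hx => by rw [(mem_filter.mp hx).2], sum_const, nsmul_eq_mul]
    _ = #{x | f x = 0} + #{x | f x = 1} * ∑ t ∈ univ.erase 0, expChar p t := by
        rw [← Finset.add_sum_erase _ _ (mem_univ 0), Finset.mul_sum]
        congr 1
        · simp [expChar]
        · exact Finset.sum_congr rfl fun t ht => by rw [hfiber t (ne_of_mem_erase ht)]
    _ = #{x | f x = 0} - #{x | f x = 1} := by
        have h := sum_expChar (p := p)
        rw [← Finset.add_sum_erase _ _ (mem_univ 0), expChar, ZMod.val_zero] at h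
        simp only [CharP.cast_eq_zero, mul_zero, zero_div, Complex.exp_zero] at h
        rw [eq_neg_of_add_eq_zero_right h]
        ring

lemma exists_sum_expChar_eq_card_mul {G : Type*} [Group G] [Fintype G]
    (H : Subgroup G) (f : G → ZMod p) (hinv : ∀ x, ∀ h ∈ H, f (x * h) = f x)
    (hscale : ∀ t ≠ 0, ∃ c : G, ∀ x, f (c * x) = t * f x) :
    ∃ z : ℤ, ∑ x, expChar p (f x) = Nat.card H * z := by
  have hdvd : ∀ t, Nat.card H ∣ #{x | f x = t} := fun t =>
    H.card_dvd_card_of_mul_mem _ fun x hx h hh => by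
      simp only [Finset.mem_filter, Finset.mem_univ, true_and] at hx ⊢
      rw [hinv x h hh, hx]
  obtain ⟨a, ha⟩ := hdvd 0
  obtain ⟨b, hb⟩ := hdvd 1
  refine ⟨a - b, ?_⟩
  rw [sum_expChar_comp_of_scaling f hscale, ha, hb]
  push_cast
  ring

end CharacterSums

section RootsOfUnity

variable {R : Type*} [CommRing R] [IsDomain R] {ζ : R} {N e : ℕ}

lemma IsPrimitiveRoot.card_rootsOfUnity_of_dvd (hζ : IsPrimitiveRoot ζ N) (hN : N ≠ 0)
    (he : e ∣ N) : Nat.card (rootsOfUnity e R) = e := by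
  obtain ⟨r, rfl⟩ := he
  have hr : r ≠ 0 := right_ne_zero_of_mul hN
  have : NeZero e := ⟨left_ne_zero_of_mul hN⟩
  have h := hζ.pow_of_dvd hr (dvd_mul_left r e)
  rw [Nat.mul_div_cancel _ (Nat.pos_of_ne_zero hr)] at h
  exact h.card_rootsOfUnity

lemma IsPrimitiveRoot.exists_pow_eq_of_pow_div_eq_one (hζ : IsPrimitiveRoot ζ N) (hN : N ≠ 0)
    (he : e ∣ N) {y : R} (hy : y ^ (N / e) = 1) : ∃ c : R, c ^ e = y := by
  obtain ⟨r, rfl⟩ := he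
  have he0 : e ≠ 0 := left_ne_zero_of_mul hN
  have : NeZero r := ⟨right_ne_zero_of_mul hN⟩
  have h := hζ.pow_of_dvd he0 (dvd_mul_right e r)
  rw [Nat.mul_div_cancel_left _ (Nat.pos_of_ne_zero he0)] at h hy
  obtain ⟨i, -, hi⟩ := h.eq_pow_of_pow_eq_one hy
  exact ⟨ζ ^ i, by rw [← hi, ← pow_mul, ← pow_mul, mul_comm]⟩

lemma FiniteField.exists_isPrimitiveRoot (F : Type*) [Field F] [Fintype F] :
    ∃ ζ : F, IsPrimitiveRoot ζ (Fintype.card F - 1) := by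
  obtain ⟨g, hg⟩ := IsCyclic.exists_ofOrder_eq_natCard (α := Fˣ)
  refine ⟨g, ?_⟩
  rw [IsPrimitiveRoot.coe_units_iff, ← Fintype.card_units, ← Nat.card_eq_fintype_card, ← hg]
  exact IsPrimitiveRoot.orderOf g

lemma FiniteField.card_rootsOfUnity_of_dvd {F : Type*} [Field F] [Fintype F] {e : ℕ}
    (he : e ∣ Fintype.card F - 1) : Nat.card (rootsOfUnity e F) = e := by
  obtain ⟨ζ, hζ⟩ := FiniteField.exists_isPrimitiveRoot F
  exact hζ.card_rootsOfUnity_of_dvd (Nat.sub_ne_zero_of_lt Fintype.one_lt_card) he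

lemma FiniteField.exists_pow_eq_of_pow_div_eq_one {F : Type*} [Field F] [Fintype F] {e : ℕ}
    (he : e ∣ Fintype.card F - 1) {y : F} (hy : y ^ ((Fintype.card F - 1) / e) = 1) :
    ∃ c : F, c ^ e = y := by
  obtain ⟨ζ, hζ⟩ := FiniteField.exists_isPrimitiveRoot F
  exact hζ.exists_pow_eq_of_pow_div_eq_one (Nat.sub_ne_zero_of_lt Fintype.one_lt_card) he hy

end RootsOfUnity

lemma pow_pow_add_one_eq_of_odd {M : Type*} [Monoid M] {x : M} {q j : ℕ}
    (hx : x ^ (q ^ 2 - 1) = 1) (hj : Odd j) : x ^ (q ^ j + 1) = x ^ (q + 1) := by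
  refine pow_eq_pow_of_modEq (Nat.ModEq.add_right 1 ?_) hx
  obtain ⟨i, rfl⟩ := hj
  rcases Nat.eq_zero_or_pos q with rfl | hq
  · simp
  have h := ((Nat.modEq_sub (Nat.one_le_pow 2 q hq)).pow i).mul_right q
  rwa [one_pow, one_mul, ← pow_mul, ← pow_succ] at h

lemma Nat.odd_div_gcd_of_gcd_add_eq {m k : ℕ} (hm : 0 < m)
    (h : Nat.gcd (m + k) (2 * k) = 2 * Nat.gcd m k) :
    Odd (m / Nat.gcd m k) ∧ Odd (k / Nat.gcd m k) := by
  set d := Nat.gcd m k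
  have hd : 0 < d := Nat.gcd_pos_of_pos_left k hm
  have hco : Nat.Coprime (m / d) (k / d) := Nat.coprime_div_gcd_div_gcd hd
  obtain ⟨a, ha⟩ : d ∣ m := Nat.gcd_dvd_left m k
  obtain ⟨b, hb⟩ : d ∣ k := Nat.gcd_dvd_right m k
  rw [ha, hb, Nat.mul_div_cancel_left _ hd, Nat.mul_div_cancel_left _ hd] at hco ⊢
  have h2 : Nat.gcd (a + b) (2 * b) = 2 := by
    rw [ha, hb, ← mul_add, mul_left_comm, Nat.gcd_mul_left, mul_comm 2 d] at h
    exact Nat.eq_of_mul_eq_mul_left hd h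
  have hab : Even (a + b) := even_iff_two_dvd.mpr (h2 ▸ Nat.gcd_dvd_left _ _)
  have hpar : Even a ↔ Even b := Nat.even_add.mp hab
  have ha2 : ¬Even a := fun hae => by
    have := Nat.dvd_gcd (even_iff_two_dvd.mp hae) (even_iff_two_dvd.mp (hpar.mp hae))
    rw [hco] at this
    exact absurd this (by decide)
  exact ⟨Nat.not_even_iff_odd.mp ha2, Nat.not_even_iff_odd.mp (hpar.not.mp ha2)⟩

lemma Nat.sq_sub_one_eq_mul (s : ℕ) : s ^ 2 - 1 = (s + 1) * (s - 1) := by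
  rw [sq, mul_self_tsub_one]

lemma pow_sq_sub_one_dvd_card_sub_one {p m n d a : ℕ} {F : Type*} [Fintype F]
    (hF : Fintype.card F = p ^ n) (hn : n = 2 * m) (hma : m = d * a) :
    (p ^ d) ^ 2 - 1 ∣ Fintype.card F - 1 := by
  rw [hF, hn, hma, ← mul_assoc, mul_comm 2 d, pow_mul, pow_mul]
  simpa only [one_pow] using Nat.sub_dvd_pow_sub_pow ((p ^ d) ^ 2) 1 a

section PrimeField

variable {p : ℕ} [Fact p.Prime] {F : Type} [Field F]

lemma trSum_pow_char [CharP F p] {r : ℕ} {w : F} (hw : w ^ p ^ r = w) :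
    trSum p 1 r w ^ p = trSum p 1 r w := by
  simp only [trSum, one_mul, sum_pow_char, ← pow_mul, ← pow_succ]
  have h := Finset.sum_range_succ' (fun i => w ^ p ^ i) r
  rw [Finset.sum_range_succ, hw, pow_zero, pow_one, add_left_inj] at h
  exact h.symm

variable [Algebra (ZMod p) F]

lemma trSum_algebraMap_mul (t : ZMod p) (r : ℕ) (w : F) :
    trSum p 1 r (algebraMap (ZMod p) F t * w) = algebraMap (ZMod p) F t * trSum p 1 r w := by
  simp only [trSum, Finset.mul_sum, mul_pow, ← map_pow, ZMod.pow_card_pow]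

lemma fToZMod_algebraMap (c : ZMod p) : fToZMod p (algebraMap (ZMod p) F c) = c :=
  Function.leftInverse_invFun (algebraMap (ZMod p) F).injective c

lemma fToZMod_algebraMap_mul (t : ZMod p) {y : F} (hy : y ^ p = y) :
    fToZMod p (algebraMap (ZMod p) F t * y) = t * fToZMod p y := by
  have := charP_of_injective_algebraMap (algebraMap (ZMod p) F).injective p
  obtain ⟨c, rfl⟩ : y ∈ (algebraMap (ZMod p) F).fieldRange := by
    rwa [Subsingleton.elim (algebraMap (ZMod p) F) (ZMod.castHom dvd_rfl F),
      ZMod.fieldRange_castHom_eq_bot, Subfield.mem_bot_iff_pow_eq_self F p]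
  rw [← map_mul, fToZMod_algebraMap, fToZMod_algebraMap]

lemma fToZMod_trSum_algebraMap_mul (t : ZMod p) {r : ℕ} {w : F} (hw : w ^ p ^ r = w) :
    fToZMod p (trSum p 1 r (algebraMap (ZMod p) F t * w)) = t * fToZMod p (trSum p 1 r w) := by
  have := charP_of_injective_algebraMap (algebraMap (ZMod p) F).injective p
  rw [trSum_algebraMap_mul, fToZMod_algebraMap_mul t (trSum_pow_char hw)]

lemma algebraMap_pow_pow_sub_one (d : ℕ) {t : ZMod p} (ht : t ≠ 0) :
    algebraMap (ZMod p) F t ^ (p ^ d - 1) = 1 := by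
  obtain ⟨j, hj⟩ : p - 1 ∣ p ^ d - 1 := by simpa using Nat.sub_dvd_pow_sub_pow p 1 d
  rw [hj, pow_mul, ← map_pow, ZMod.pow_card_sub_one_eq_one ht, map_one, one_pow]

end PrimeField

section Phase

variable {p : ℕ} [Fact p.Prime] {m n k : ℕ} {F : Type} [Field F] [Algebra (ZMod p) F]

def Tphase (p m n k : ℕ) {F : Type} [Field F] [Algebra (ZMod p) F] (α β x : F) : ZMod p :=
  fToZMod p (trSum p 1 m (α * x ^ (p ^ m + 1))) + fToZMod p (trSum p 1 n (β * x ^ (p ^ k + 1)))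

lemma Tphase_zero (α β : F) : Tphase p m n k α β 0 = 0 := by
  have htr : ∀ r, trSum p 1 r (0 : F) = 0 := fun r =>
    Finset.sum_eq_zero fun i _ => zero_pow (pow_ne_zero _ (Fact.out : p.Prime).ne_zero)
  have h0 : fToZMod p (0 : F) = 0 := by
    rw [← map_zero (algebraMap (ZMod p) F), fToZMod_algebraMap]
  simp [Tphase, htr, h0]

lemma Tphase_mul [Fintype F] (hF : Fintype.card F = p ^ n) (hn : n = 2 * m) {α : F}
    (hα : α ^ p ^ m = α) (β : F) {c : F} {t : ZMod p}
    (hcm : c ^ (p ^ m + 1) = algebraMap (ZMod p) F t)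
    (hck : c ^ (p ^ k + 1) = algebraMap (ZMod p) F t) (x : F) :
    Tphase p m n k α β (c * x) = t * Tphase p m n k α β x := by
  have hfrob : ∀ y : F, y ^ p ^ n = y := fun y => hF ▸ FiniteField.pow_card y
  have hαx : (α * x ^ (p ^ m + 1)) ^ p ^ m = α * x ^ (p ^ m + 1) := by
    rw [mul_pow, hα, ← pow_mul, add_one_mul, ← sq, ← pow_mul, mul_comm m, ← hn, pow_add,
      hfrob, ← pow_succ']
  have hm : α * (c * x) ^ (p ^ m + 1) = algebraMap (ZMod p) F t * (α * x ^ (p ^ m + 1)) := by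
    rw [mul_pow, hcm]; ring
  have hk : β * (c * x) ^ (p ^ k + 1) = algebraMap (ZMod p) F t * (β * x ^ (p ^ k + 1)) := by
    rw [mul_pow, hck]; ring
  rw [Tphase, Tphase, hm, hk, fToZMod_trSum_algebraMap_mul t hαx,
    fToZMod_trSum_algebraMap_mul t (hfrob _), mul_add]

lemma Tsum_eq_one_add_sum_units [Fintype F] (α β : F) :
    Tsum p m n k F α β = 1 + ∑ u : Fˣ, expChar p (Tphase p m n k α β u) := by
  change ∑ x, expChar p (Tphase p m n k α β x) = _
  rw [Fintype.sum_eq_add_sum_units, Tphase_zero]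
  simp [expChar]

end Phase

section Norm

variable {p : ℕ} [Fact p.Prime] {F : Type} [Field F] [Fintype F] [Algebra (ZMod p) F]

lemma exists_pow_eq_algebraMap {d : ℕ} (hdvd : (p ^ d) ^ 2 - 1 ∣ Fintype.card F - 1)
    {t : ZMod p} (ht : t ≠ 0) : ∃ c : F, c ^ (p ^ d + 1) = algebraMap (ZMod p) F t := by
  obtain ⟨r, hr⟩ := hdvd
  refine FiniteField.exists_pow_eq_of_pow_div_eq_one ⟨(p ^ d - 1) * r, ?_⟩ ?_
  · rw [hr, Nat.sq_sub_one_eq_mul, mul_assoc]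
  · rw [hr, Nat.sq_sub_one_eq_mul, mul_assoc, Nat.mul_div_cancel_left _ (Nat.succ_pos _),
      pow_mul, algebraMap_pow_pow_sub_one d ht, one_pow]

lemma Tphase_mul_of_pow_eq_algebraMap {m n k d a b : ℕ} (hF : Fintype.card F = p ^ n)
    (hn : n = 2 * m) (hma : m = d * a) (ha : Odd a) (hkb : k = d * b) (hb : Odd b) {α : F}
    (hα : α ^ p ^ m = α) (β : F) {t : ZMod p} (ht : t ≠ 0) {c : F}
    (hc : c ^ (p ^ d + 1) = algebraMap (ZMod p) F t) (x : F) :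
    Tphase p m n k α β (c * x) = t * Tphase p m n k α β x := by
  have hc' : c ^ ((p ^ d) ^ 2 - 1) = 1 := by
    rw [Nat.sq_sub_one_eq_mul, pow_mul, hc, algebraMap_pow_pow_sub_one d ht]
  refine Tphase_mul hF hn hα β ?_ ?_ x
  · rw [hma, pow_mul, pow_pow_add_one_eq_of_odd hc' ha, hc]
  · rw [hkb, pow_mul, pow_pow_add_one_eq_of_odd hc' hb, hc]

theorem exists_Tsum_eq_one_add_mul {m n k d a b : ℕ} (hF : Fintype.card F = p ^ n)
    (hn : n = 2 * m) (hma : m = d * a) (ha : Odd a) (hkb : k = d * b) (hb : Odd b) {α : F}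
    (hα : α ^ p ^ m = α) (β : F) :
    ∃ z : ℤ, Tsum p m n k F α β = 1 + ((p : ℂ) ^ d + 1) * z := by
  have hdvd := pow_sq_sub_one_dvd_card_sub_one hF hn hma
  have hinv : ∀ u : Fˣ, ∀ h ∈ rootsOfUnity (p ^ d + 1) F,
      Tphase p m n k α β ↑(u * h) = Tphase p m n k α β u := by
    intro u h hh
    have h1 : (h : F) ^ (p ^ d + 1) = algebraMap (ZMod p) F 1 := by
      rw [← Units.val_pow_eq_pow_val, (mem_rootsOfUnity _ _).mp hh, Units.val_one, map_one]
    rw [Units.val_mul, mul_comm,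
      Tphase_mul_of_pow_eq_algebraMap hF hn hma ha hkb hb hα β one_ne_zero h1, one_mul]
  have hscale : ∀ t ≠ 0, ∃ c : Fˣ, ∀ u : Fˣ,
      Tphase p m n k α β ↑(c * u) = t * Tphase p m n k α β u := by
    intro t ht
    obtain ⟨c, hc⟩ := exists_pow_eq_algebraMap hdvd ht
    have hc0 : c ≠ 0 := by
      rintro rfl
      rw [zero_pow (Nat.succ_ne_zero _), eq_comm, map_eq_zero] at hc
      exact ht hc
    exact ⟨Units.mk0 c hc0, fun u =>
      Tphase_mul_of_pow_eq_algebraMap hF hn hma ha hkb hb hα β ht hc u⟩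
  obtain ⟨z, hz⟩ :=
    exists_sum_expChar_eq_card_mul _ (fun u : Fˣ => Tphase p m n k α β u) hinv hscale
  refine ⟨z, ?_⟩
  rw [Tsum_eq_one_add_sum_units, hz, FiniteField.card_rootsOfUnity_of_dvd
    ((Dvd.intro _ (Nat.sq_sub_one_eq_mul _).symm).trans hdvd)]
  push_cast
  rfl

end Norm

end

theorem stmt7_general (p m k n d d' : ℕ) (hp : Nat.Prime p)
    (hm : 0 < m) (hn : n = 2 * m)
    (hd : d = Nat.gcd m k) (hd' : d' = Nat.gcd (m + k) (2 * k))
    (F : Type) [Field F] [Fintype F] [Algebra (ZMod p) F] (hF : Fintype.card F = p ^ n) (hcase : d' = 2 * d)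
    (α β : F) (hα : α ^ p ^ m = α) :
    ∃ z : ℤ, Tsum p m n k F α β = 1 + ((p : ℂ) ^ d + 1) * (z : ℂ) := by
  have := Fact.mk hp
  subst hd
  obtain ⟨ha, hb⟩ := Nat.odd_div_gcd_of_gcd_add_eq hm (hd' ▸ hcase)
  exact exists_Tsum_eq_one_add_mul hF hn (Nat.mul_div_cancel' (Nat.gcd_dvd_left m k)).symm ha
    (Nat.mul_div_cancel' (Nat.gcd_dvd_right m k)).symm hb hα β

theorem stmt7 (p m k n d d' : ℕ) (hp : Nat.Prime p) (hodd : p % 2 = 1)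
    (hm : 0 < m) (hn : n = 2 * m) (hk : k ≤ n - 1) (hkm : k ≠ m)
    (hd : d = Nat.gcd m k) (hd' : d' = Nat.gcd (m + k) (2 * k))
    (F : Type) [Field F] [Fintype F] [Algebra (ZMod p) F] (hF : Fintype.card F = p ^ n) (hcase : d' = 2 * d)
    (α β : F) (hα : α ^ p ^ m = α) (hne : ¬(α = 0 ∧ β = 0)) :
    ∃ z : ℤ, Tsum p m n k F α β = 1 + ((p : ℂ) ^ d + 1) * (z : ℂ) :=
  stmt7_general p m k n d d' hp hm hn hd hd' F hF hcase α β hα
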